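/- arXiv:1103.2285 — 3 statements merged into one kernel-verified Lean document; each statement's English description precedes it below -/
import Mathlib

section
/- For every real α > 0 and every complex z ≠ 0 with positive real part, ∫_0^∞ e^{-t/z} · F^{(α+1)}(t) dt = z · F^{(α)}(z), where F^{(β)}(w) = ∑_{n=0}^∞ w^n / (n!)^β. -/
open scoped Nat

/-! Expand `F^{(α+1)}` and integrate termwise: with `b = 1/z`, each term is the Gamma integral
`∫₀^∞ tⁿ e^{-bt} dt = n! / bⁿ⁺¹ = n! zⁿ⁺¹`, which lowers `(n!)^{α+1}` to `(n!)^α`. Termwise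
integration is legitimate because `|e^{-bt}| = e^{-t Re b}`, so the same computation with the
real rate `Re b` gives a convergent series of norms. -/

open MeasureTheory Set Filter Topology

theorem summable_pow_div_factorial_rpow {α : ℝ} (hα : 0 < α) (r : ℝ) :
    Summable fun n : ℕ => r ^ n / (n ! : ℝ) ^ α := by
  refine summable_of_ratio_norm_eventually_le (r := 1 / 2) (by norm_num) ?_
  have hgrowth : Tendsto (fun n : ℕ => ((n + 1 : ℕ) : ℝ) ^ α) atTop atTop :=
    (tendsto_rpow_atTop hα).comp
      (tendsto_natCast_atTop_atTop.comp (tendsto_add_atTop_nat 1))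
  filter_upwards [hgrowth.eventually_ge_atTop (2 * |r|)] with n hn
  have hfact_succ : ((n + 1)! : ℝ) ^ α = ((n + 1 : ℕ) : ℝ) ^ α * (n ! : ℝ) ^ α := by
    rw [Nat.factorial_succ, Nat.cast_mul, Real.mul_rpow (by positivity) (by positivity)]
  have hpos : 0 < ((n + 1 : ℕ) : ℝ) ^ α := by positivity
  have hfact_pos : 0 < (n ! : ℝ) ^ α := by positivity
  simp only [norm_div, norm_pow, Real.norm_eq_abs, hfact_succ, abs_of_pos hfact_pos,
    abs_of_pos (mul_pos hpos hfact_pos)]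
  rw [pow_succ', mul_div_mul_comm]
  refine mul_le_mul_of_nonneg_right ?_ (by positivity)
  rw [div_le_iff₀ hpos]
  linarith

lemma norm_pow_mul_cexp_neg_mul (b : ℂ) (n : ℕ) {t : ℝ} (ht : 0 ≤ t) :
    ‖(t : ℂ) ^ n * Complex.exp (-b * t)‖ = t ^ n * Real.exp (-b.re * t) := by
  rw [norm_mul, norm_pow, Complex.norm_real, Real.norm_of_nonneg ht, Complex.norm_exp]
  simp

lemma integrableOn_pow_mul_cexp_neg_mul_Ioi {b : ℂ} (hb : 0 < b.re) (n : ℕ) :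
    IntegrableOn (fun t : ℝ => (t : ℂ) ^ n * Complex.exp (-b * t)) (Ioi 0) := by
  have hreal := integrableOn_rpow_mul_exp_neg_mul_rpow (s := n) (p := 1)
    (by linarith [(Nat.cast_nonneg n : (0 : ℝ) ≤ n)]) one_pos hb
  refine hreal.mono' (by fun_prop) ?_
  filter_upwards [self_mem_ae_restrict measurableSet_Ioi] with t ht
  rw [norm_pow_mul_cexp_neg_mul b n (le_of_lt ht), Real.rpow_natCast, Real.rpow_one]

lemma tendsto_pow_mul_cexp_neg_mul_atTop {b : ℂ} (hb : 0 < b.re) (n : ℕ) :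
    Tendsto (fun t : ℝ => (t : ℂ) ^ n * Complex.exp (-b * t)) atTop (𝓝 0) := by
  rw [tendsto_zero_iff_norm_tendsto_zero]
  refine (tendsto_rpow_mul_exp_neg_mul_atTop_nhds_zero n b.re hb).congr' ?_
  filter_upwards [eventually_ge_atTop 0] with t ht
  rw [norm_pow_mul_cexp_neg_mul b n ht, Real.rpow_natCast]

lemma integral_cexp_neg_mul_Ioi {b : ℂ} (hb : 0 < b.re) :
    ∫ t : ℝ in Ioi 0, Complex.exp (-b * t) = 1 / b := by
  rw [integral_exp_mul_complex_Ioi (by simpa using hb)]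
  simp [neg_div]

lemma integral_pow_succ_mul_cexp_neg_mul_Ioi {b : ℂ} (hb : 0 < b.re) (n : ℕ) :
    b * ∫ t : ℝ in Ioi 0, (t : ℂ) ^ (n + 1) * Complex.exp (-b * t) =
      (n + 1) * ∫ t : ℝ in Ioi 0, (t : ℂ) ^ n * Complex.exp (-b * t) := by
  have hderiv : ∀ t : ℝ, HasDerivAt (fun t : ℝ => (t : ℂ) ^ (n + 1) * Complex.exp (-b * t))
      ((n + 1) * ((t : ℂ) ^ n * Complex.exp (-b * t)) -
        b * ((t : ℂ) ^ (n + 1) * Complex.exp (-b * t))) t := by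
    intro t
    have hlin : HasDerivAt (fun x : ℂ => -b * x) (-b) t := by
      simpa using (hasDerivAt_id (t : ℂ)).const_mul (-b)
    convert ((hasDerivAt_pow (n + 1) (t : ℂ)).fun_mul hlin.cexp).comp_ofReal using 1
    rw [Nat.add_sub_cancel]
    push_cast
    ring
  have hint := integrableOn_pow_mul_cexp_neg_mul_Ioi hb
  have hFTC := integral_Ioi_of_hasDerivAt_of_tendsto' (fun t _ => hderiv t)
    (((hint n).const_mul _).sub ((hint (n + 1)).const_mul _))
    (tendsto_pow_mul_cexp_neg_mul_atTop hb (n + 1))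
  rw [integral_sub ((hint n).const_mul _) ((hint (n + 1)).const_mul _), integral_const_mul,
    integral_const_mul] at hFTC
  simp only [Complex.ofReal_zero, ne_eq, Nat.add_eq_zero_iff, one_ne_zero, and_false,
    not_false_eq_true, zero_pow, zero_mul, sub_zero] at hFTC
  exact (sub_eq_zero.mp hFTC).symm

theorem integral_pow_mul_cexp_neg_mul_Ioi {b : ℂ} (hb : 0 < b.re) (n : ℕ) :
    ∫ t : ℝ in Ioi 0, (t : ℂ) ^ n * Complex.exp (-b * t) = n ! / b ^ (n + 1) := by
  have hb0 : b ≠ 0 := fun h => by simp [h] at hb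
  induction n with
  | zero => simpa using integral_cexp_neg_mul_Ioi hb
  | succ n ih =>
    have hrec := integral_pow_succ_mul_cexp_neg_mul_Ioi hb n
    rw [ih] at hrec
    rw [← mul_right_inj' hb0, hrec, Nat.factorial_succ]
    push_cast
    field_simp
    ring

lemma integral_norm_pow_mul_cexp_neg_mul_Ioi {b : ℂ} (hb : 0 < b.re) (n : ℕ) :
    ∫ t : ℝ in Ioi 0, ‖(t : ℂ) ^ n * Complex.exp (-b * t)‖ = n ! / b.re ^ (n + 1) := by
  rw [setIntegral_congr_fun measurableSet_Ioi
    fun t ht => norm_pow_mul_cexp_neg_mul b n (le_of_lt ht)]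
  apply Complex.ofReal_injective
  rw [← integral_complex_ofReal]
  push_cast
  exact integral_pow_mul_cexp_neg_mul_Ioi (b := b.re) (by simpa using hb) n

theorem integral_cexp_neg_mul_mul_tsum_pow {b : ℂ} (hb : 0 < b.re) {a : ℕ → ℂ}
    (ha : Summable fun n => ‖a n‖ * (n ! / b.re ^ (n + 1))) :
    ∫ t : ℝ in Ioi 0, Complex.exp (-b * t) * ∑' n, a n * (t : ℂ) ^ n =
      ∑' n, a n * (n ! / b ^ (n + 1)) := by
  set F : ℕ → ℝ → ℂ := fun n t => a n * ((t : ℂ) ^ n * Complex.exp (-b * t))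
  have hF_int : ∀ n, Integrable (F n) (volume.restrict (Ioi 0)) := fun n =>
    (integrableOn_pow_mul_cexp_neg_mul_Ioi hb n).const_mul (a n)
  have hF_norm : ∀ n, ∫ t in Ioi 0, ‖F n t‖ = ‖a n‖ * (n ! / b.re ^ (n + 1)) := fun n => by
    simp only [F, norm_mul (a n), integral_const_mul,
      integral_norm_pow_mul_cexp_neg_mul_Ioi hb]
  have hF_sum : ∀ t : ℝ, Complex.exp (-b * t) * ∑' n, a n * (t : ℂ) ^ n = ∑' n, F n t :=
    fun t => by
      rw [← tsum_mul_left]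
      exact tsum_congr fun n => by ring
  simp_rw [hF_sum]
  rw [← integral_tsum_of_summable_integral_norm hF_int (by simpa only [hF_norm] using ha)]
  simp only [F, integral_const_mul, integral_pow_mul_cexp_neg_mul_Ioi hb]

theorem stmt_2 (α : ℝ) (hα : 0 < α) (z : ℂ) (hz : z ≠ 0) (hre : 0 < z.re) :
    ∫ t in Set.Ioi (0 : ℝ),
        Complex.exp (-(t : ℂ) / z) * ∑' n : ℕ, (t : ℂ) ^ n / (((n ! : ℝ) ^ (α + 1) : ℝ) : ℂ) =
      z * ∑' n : ℕ, z ^ n / (((n ! : ℝ) ^ α : ℝ) : ℂ) := by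
  have hb : 0 < z⁻¹.re := by
    rw [Complex.inv_re]
    exact div_pos hre (Complex.normSq_pos.mpr hz)
  have hexp : ∀ t : ℝ, -(t : ℂ) / z = -z⁻¹ * t := fun t => by ring
  have hfact_rpow : ∀ n : ℕ, (n ! : ℝ) ^ (α + 1) = (n ! : ℝ) ^ α * n ! := fun n =>
    Real.rpow_add_one (Nat.cast_ne_zero.mpr n.factorial_ne_zero) α
  simp_rw [hexp, div_eq_inv_mul (_ ^ _ : ℂ)]
  rw [integral_cexp_neg_mul_mul_tsum_pow hb]
  · rw [← tsum_mul_left]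
    refine tsum_congr fun n => ?_
    have hfact : (n ! : ℂ) ≠ 0 := Nat.cast_ne_zero.mpr n.factorial_ne_zero
    have hfact_rpow_ne : (((n ! : ℝ) ^ α : ℝ) : ℂ) ≠ 0 :=
      Complex.ofReal_ne_zero.mpr (by positivity)
    rw [hfact_rpow, Complex.ofReal_mul, Complex.ofReal_natCast, inv_pow]
    field_simp
    ring
  · refine ((summable_pow_div_factorial_rpow hα (z⁻¹.re)⁻¹).mul_left (z⁻¹.re)⁻¹).congr
      fun n => ?_
    rw [hfact_rpow, norm_inv, Complex.norm_real, Real.norm_of_nonneg (by positivity)]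
    field_simp
    ring
end

section
/- For every real α > 0 and every δ > 0, there exists C > 0 such that F(x) = ∑_{n=0}^∞ x^n/(n!)^α ≥ C · exp((α − δ) · x^{1/α}) for all real x ≥ 1. (Hence the order of F is at least 1/α.) -/
open scoped Nat

theorem fact_upper (n : ℕ) (hn : 1 ≤ n) : (n ! : ℝ) ≤ Real.exp 1 * n * ((n : ℝ) / Real.exp 1)^n := by
  have hn' : (1:ℝ) ≤ n := by exact_mod_cast hn
  have hp : 0 < Stirling.stirlingSeq n := by
    obtain ⟨m, rfl⟩ := Nat.exists_eq_add_of_le hn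
    rw [add_comm]; exact Stirling.stirlingSeq'_pos m
  have h1 : Stirling.stirlingSeq n ≤ Stirling.stirlingSeq 1 := by
    have := Stirling.log_stirlingSeq'_antitone (a := 0) (b := n - 1) (Nat.zero_le _)
    simp only [Function.comp] at this
    rw [Nat.succ_eq_add_one, Nat.sub_add_cancel hn] at this
    calc Stirling.stirlingSeq n = Real.exp (Real.log (Stirling.stirlingSeq n)) := (Real.exp_log hp).symm
      _ ≤ Real.exp (Real.log (Stirling.stirlingSeq (0+1))) := Real.exp_le_exp.2 this
      _ = Stirling.stirlingSeq 1 := by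
          rw [Real.exp_log (by simpa using Stirling.stirlingSeq'_pos 0)]
  have hden : (0:ℝ) < Real.sqrt (2 * n) * ((n : ℝ) / Real.exp 1) ^ n := by positivity
  rw [Stirling.stirlingSeq_one, Stirling.stirlingSeq, div_le_iff₀ hden] at h1
  refine h1.trans ?_
  have hs : Real.sqrt (2 * n) ≤ Real.sqrt 2 * n := by
    rw [show (2:ℝ) * n = 2 * (n:ℝ) from rfl, Real.sqrt_mul (by norm_num)]
    gcongr
    calc Real.sqrt n ≤ Real.sqrt (n^2) := by gcongr; nlinarith
      _ = n := by rw [Real.sqrt_sq (by positivity)]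
  calc Real.exp 1 / Real.sqrt 2 * (Real.sqrt (2*n) * ((n:ℝ)/Real.exp 1)^n)
      ≤ Real.exp 1 / Real.sqrt 2 * (Real.sqrt 2 * n * ((n:ℝ)/Real.exp 1)^n) := by
        exact mul_le_mul_of_nonneg_left (mul_le_mul_of_nonneg_right hs (by positivity)) (by positivity)
    _ = Real.exp 1 * n * ((n:ℝ)/Real.exp 1)^n := by
        rw [div_mul_eq_mul_div, mul_comm (Real.sqrt 2) (n:ℝ)]
        field_simp

theorem summable_aux (α : ℝ) (hα : 0 < α) (x : ℝ) (hx : 0 ≤ x) :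
    Summable (fun n : ℕ => x ^ n / ((n ! : ℝ) ^ α)) := by
  have ht : Filter.Tendsto (fun n : ℕ => ((n:ℝ)+1) ^ α) Filter.atTop Filter.atTop :=
    (tendsto_rpow_atTop hα).comp
      (Filter.tendsto_atTop_add_const_right _ 1 tendsto_natCast_atTop_atTop)
  refine summable_of_ratio_norm_eventually_le (r := 1/2) (by norm_num) ?_
  filter_upwards [ht.eventually_ge_atTop (2*x)] with n hn
  have h1 : (0:ℝ) < ((n:ℝ)+1) ^ α := Real.rpow_pos_of_pos (by positivity) _
  have h2 : (0:ℝ) < ((n ! : ℝ)) ^ α := Real.rpow_pos_of_pos (by positivity) _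
  have hfact : (((n+1)! : ℝ)) ^ α = ((n:ℝ)+1) ^ α * ((n ! : ℝ)) ^ α := by
    rw [Nat.factorial_succ]
    push_cast
    rw [Real.mul_rpow (by positivity) (by positivity)]
  have hx2 : x / (((n:ℝ)+1) ^ α) ≤ 1/2 := by
    rw [div_le_iff₀ h1]; linarith
  rw [Real.norm_eq_abs, Real.norm_eq_abs, abs_of_nonneg (by positivity),
    abs_of_nonneg (by positivity), hfact, pow_succ]
  calc x ^ n * x / (((n:ℝ)+1) ^ α * (n ! : ℝ) ^ α)
      = (x / ((n:ℝ)+1) ^ α) * (x ^ n / (n ! : ℝ) ^ α) := by ring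
    _ ≤ (1/2) * (x ^ n / (n ! : ℝ) ^ α) :=
        mul_le_mul_of_nonneg_right hx2 (by positivity)
    _ = 1/2 * (x ^ n / (n ! : ℝ) ^ α) := by ring

theorem stmt_6 (α : ℝ) (hα : 0 < α) :
    ∀ δ > 0, ∃ C > 0, ∀ x : ℝ, 1 ≤ x →
      C * Real.exp ((α - δ) * x ^ (1 / α)) ≤ ∑' n : ℕ, x ^ n / ((n ! : ℝ) ^ α) := by
  intro δ hδ
  set k := ⌈α⌉₊ with hkdef
  have hk : α ≤ (k:ℝ) := Nat.le_ceil α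
  refine ⟨δ^k / (k ! * Real.exp (2*α)), by positivity, ?_⟩
  intro x hx
  have hx0 : (0:ℝ) < x := lt_of_lt_of_le one_pos hx
  set t := x ^ (1/α) with htdef
  have ht0 : (0:ℝ) < t := Real.rpow_pos_of_pos hx0 _
  have ht1 : (1:ℝ) ≤ t := by
    calc (1:ℝ) = (1:ℝ) ^ (1/α) := (Real.one_rpow _).symm
      _ ≤ x ^ (1/α) := Real.rpow_le_rpow zero_le_one hx (by positivity)
  set n := ⌊t⌋₊ with hndef
  have hn1 : 1 ≤ n := Nat.le_floor (by exact_mod_cast ht1)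
  have hnt : (n:ℝ) ≤ t := Nat.floor_le ht0.le
  have htn : t < (n:ℝ) + 1 := Nat.lt_floor_add_one t
  have hn0 : (0:ℝ) < n := by exact_mod_cast hn1
  have hxt : t ^ α = x := by
    rw [htdef, one_div, Real.rpow_inv_rpow hx0.le hα.ne']
  -- Step A : exp t / (exp 2 * t) ≤ t^n / n!
  have hA : Real.exp t / (Real.exp 2 * t) ≤ t^n / (n ! : ℝ) := by
    have hf : (n ! : ℝ) ≤ Real.exp 1 * t * (t / Real.exp 1)^n := by
      refine (fact_upper n hn1).trans ?_
      gcongr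
    have hpow : (t/Real.exp 1)^n = t^n / Real.exp n := by rw [div_pow, Real.exp_one_pow]
    have hval : t^n / (Real.exp 1 * t * (t/Real.exp 1)^n) = Real.exp n / (Real.exp 1 * t) := by
      rw [hpow]
      field_simp
    have h1 : Real.exp t / (Real.exp 2 * t) ≤ Real.exp n / (Real.exp 1 * t) := by
      rw [show Real.exp 2 = Real.exp 1 * Real.exp 1 from by rw [← Real.exp_add]; norm_num]
      rw [div_le_div_iff₀ (by positivity) (by positivity)]
      have h2 : Real.exp t ≤ Real.exp ((n:ℝ)+1) := Real.exp_le_exp.2 (le_of_lt htn)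
      rw [Real.exp_add] at h2
      nlinarith [mul_le_mul_of_nonneg_right h2 (by positivity : (0:ℝ) ≤ Real.exp 1 * t)]
    calc Real.exp t / (Real.exp 2 * t) ≤ Real.exp n / (Real.exp 1 * t) := h1
      _ = t^n / (Real.exp 1 * t * (t/Real.exp 1)^n) := hval.symm
      _ ≤ t^n / (n ! : ℝ) :=
          div_le_div_of_nonneg_left (by positivity) (by positivity) hf
  -- Step B : term bound
  have hterm : Real.exp (α*t) / (Real.exp (2*α) * t ^ α) ≤ x ^ n / (n ! : ℝ)^α := by
    have lhs_eq : Real.exp (α*t) / (Real.exp (2*α) * t ^ α) = (Real.exp t / (Real.exp 2 * t)) ^ α := by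
      rw [Real.div_rpow (by positivity) (by positivity),
        Real.mul_rpow (by positivity) ht0.le, ← Real.exp_mul, ← Real.exp_mul, mul_comm α t]
    have rhs_eq : (t^n / (n ! : ℝ)) ^ α = x ^ n / (n ! : ℝ)^α := by
      rw [Real.div_rpow (by positivity) (by positivity), ← hxt,
        ← Real.rpow_natCast t n, ← Real.rpow_natCast (t^α) n,
        ← Real.rpow_mul ht0.le, ← Real.rpow_mul ht0.le, mul_comm]
    rw [lhs_eq, ← rhs_eq]
    exact Real.rpow_le_rpow (by positivity) hA hα.le
  -- Step C : constant bound
  have key : δ^k * t^α ≤ (k ! : ℝ) * Real.exp (δ*t) := by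
    have h1 : t ^ α ≤ t ^ (k:ℝ) := Real.rpow_le_rpow_of_exponent_le ht1 hk
    have h2 : t ^ ((k:ℝ)) = t ^ k := Real.rpow_natCast t k
    have h3 : (δ*t)^k / (k ! : ℝ) ≤ Real.exp (δ*t) := Real.pow_div_factorial_le_exp (x := δ*t) (by positivity) k
    rw [div_le_iff₀ (by positivity : (0:ℝ) < (k ! : ℝ))] at h3
    calc δ^k * t^α ≤ δ^k * t^(k:ℝ) := mul_le_mul_of_nonneg_left h1 (by positivity)
      _ = (δ*t)^k := by rw [h2, mul_pow]
      _ ≤ Real.exp (δ*t) * (k ! : ℝ) := h3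
      _ = (k ! : ℝ) * Real.exp (δ*t) := by ring
  have hC : δ^k / ((k ! : ℝ) * Real.exp (2*α)) * Real.exp ((α-δ)*t) ≤
      Real.exp (α*t) / (Real.exp (2*α) * t^α) := by
    rw [div_mul_eq_mul_div, div_le_div_iff₀ (by positivity) (by positivity)]
    have hE : Real.exp (α*t) = Real.exp (δ*t) * Real.exp ((α-δ)*t) := by
      rw [← Real.exp_add]; ring_nf
    rw [hE]
    calc δ^k * Real.exp ((α-δ)*t) * (Real.exp (2*α)*t^α)
        = (δ^k * t^α) * (Real.exp ((α-δ)*t) * Real.exp (2*α)) := by ring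
      _ ≤ ((k ! : ℝ) * Real.exp (δ*t)) * (Real.exp ((α-δ)*t) * Real.exp (2*α)) :=
          mul_le_mul_of_nonneg_right key (by positivity)
      _ = Real.exp (δ*t) * Real.exp ((α-δ)*t) * ((k ! : ℝ) * Real.exp (2*α)) := by ring
  have hsum := summable_aux α hα x hx0.le
  calc δ^k / ((k ! : ℝ) * Real.exp (2*α)) * Real.exp ((α-δ)*t) ≤
      Real.exp (α*t) / (Real.exp (2*α) * t^α) := hC
    _ ≤ x ^ n / (n ! : ℝ)^α := hterm
    _ ≤ ∑' m : ℕ, x ^ m / ((m ! : ℝ) ^ α) := Summable.le_tsum hsum n (fun m _ => by positivity)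
end

section
/- Let a, b, α > 0 be real and let z be a complex number with |z| > 1 and |arg z| < (a·α·π)/2. Then for every δ > 0 there is a constant M (depending on a, b, α, δ but not on x, y, z) such that for all x ≥ 0 and y ≥ 0, |z^{x+iy} / Γ(a(x+iy)+b)^α| ≤ M · e^{(aα+δ)x} · |z|^x · (ax+b)^{−α(ax+b)} · e^{(|arg z| + aαπ/2 + δ)·y}, where z^{w} = exp(w·Log z) with the principal logarithm, and Γ(·)^α = exp(α·Log Γ(·)) using a continuous branch. -/
/-!
Since `‖z ^ w‖ ≤ ‖z‖ ^ x * exp (|arg z| * y)`, everything rests on a lower bound for `|Γ(u + iv)|`,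
`u = a x + b`, `v = a y`. By Euler's limit formula `Γ(u) / |Γ(u + iv)|` is a limit of products of
`|u + j + iv| / (u + j) ≤ (1 + v² / (j + 1)²) ^ (1/2)` (for `u ≥ 1`), and the Euler product
`∏ (1 + v² / (j + 1)²) = sinh (π v) / (π v) ≤ exp (π v)` bounds these by `exp (π v / 2)`.
Together with `Γ(u + 1) ≥ u ^ u * exp (-u)` (the Euler integral over `t ≥ u`) and the functional
equation this gives `|Γ(u + iv)| ≥ u ^ u * exp (-u - π v / 2) / (u + v)`, and after raising to the
power `-α` the polynomial factor `(u + v) ^ α` is absorbed into `exp (δ (x + y))`.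
-/

open Real Filter Topology Finset

theorem Real.sinh_le_mul_exp (x : ℝ) : sinh x ≤ x * exp x := by
  have h : 1 - 2 * x ≤ exp (-2 * x) := by linarith [add_one_le_exp (-2 * x)]
  have h' : exp (-2 * x) * exp x = exp (-x) := by rw [← exp_add]; ring_nf
  rw [sinh_eq]
  nlinarith [mul_le_mul_of_nonneg_right h (exp_pos x).le]

-- partial products of the Euler product for `sinh (π v) / (π v)`
theorem prod_one_add_sq_div_sq_le_exp {v : ℝ} (hv : 0 ≤ v) (n : ℕ) :
    ∏ j ∈ range n, (1 + v ^ 2 / ((j : ℝ) + 1) ^ 2) ≤ exp (π * v) := by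
  set P : ℕ → ℝ := fun n ↦ ∏ j ∈ range n, (1 + v ^ 2 / ((j : ℝ) + 1) ^ 2)
  have hP_mono : Monotone P := monotone_nat_of_le_succ fun n ↦ by
    simp only [P, prod_range_succ]
    exact le_mul_of_one_le_right (prod_nonneg fun j _ ↦ by positivity)
      (le_add_of_nonneg_right (by positivity))
  have hP_lim : Tendsto (fun n ↦ π * v * P n) atTop (𝓝 (sinh (π * v))) := by
    have h := (Complex.continuous_im.tendsto _).comp
      (Complex.tendsto_euler_sin_prod (v * Complex.I))
    convert h using 1
    · ext n
      have h_term (j : ℕ) : (1 : ℂ) - (v * Complex.I) ^ 2 / ((j : ℂ) + 1) ^ 2 =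
          ((1 + v ^ 2 / ((j : ℝ) + 1) ^ 2 : ℝ) : ℂ) := by
        push_cast; rw [mul_pow, Complex.I_sq]; ring
      simp only [Function.comp_apply, P, h_term, ← Complex.ofReal_prod, Complex.mul_im,
        Complex.mul_re, Complex.I_re, Complex.I_im, Complex.ofReal_re, Complex.ofReal_im]
      ring
    · rw [← mul_assoc, ← Complex.ofReal_mul, Complex.sin_mul_I, ← Complex.ofReal_sinh,
        Complex.mul_I_im, Complex.ofReal_re]
  rcases hv.eq_or_lt with rfl | hv
  · simp
  have hπv : 0 < π * v := by positivity
  have h := (hP_mono.const_mul hπv.le).ge_of_tendsto hP_lim n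
  exact le_of_mul_le_mul_left (h.trans (sinh_le_mul_exp (π * v))) hπv

theorem prod_norm_add_natCast_le {u v : ℝ} (hu : 1 ≤ u) (hv : 0 ≤ v) (n : ℕ) :
    ∏ j ∈ range n, ‖(u + v * Complex.I : ℂ) + j‖ ≤ exp (π * v / 2) * ∏ j ∈ range n, (u + j) := by
  have h_sq (j : ℕ) : ‖(u + v * Complex.I : ℂ) + j‖ ^ 2 ≤
      (u + j) ^ 2 * (1 + v ^ 2 / ((j : ℝ) + 1) ^ 2) := by
    rw [show (u + v * Complex.I : ℂ) + j = ((u + j : ℝ) : ℂ) + v * Complex.I by push_cast; ring,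
      Complex.norm_add_mul_I, sq_sqrt (by positivity), mul_one_add, mul_div_assoc']
    have : ((j : ℝ) + 1) ^ 2 ≤ (u + j) ^ 2 := pow_le_pow_left₀ (by positivity) (by linarith) 2
    gcongr
    rw [le_div_iff₀ (by positivity)]
    nlinarith [sq_nonneg v]
  refine le_of_pow_le_pow_left₀ two_ne_zero (by positivity) ?_
  calc (∏ j ∈ range n, ‖(u + v * Complex.I : ℂ) + j‖) ^ 2
      = ∏ j ∈ range n, ‖(u + v * Complex.I : ℂ) + j‖ ^ 2 := (prod_pow _ _ _).symm
    _ ≤ ∏ j ∈ range n, ((u + j) ^ 2 * (1 + v ^ 2 / ((j : ℝ) + 1) ^ 2)) :=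
        prod_le_prod (fun _ _ ↦ by positivity) fun j _ ↦ h_sq j
    _ = (∏ j ∈ range n, (u + j)) ^ 2 * ∏ j ∈ range n, (1 + v ^ 2 / ((j : ℝ) + 1) ^ 2) := by
        rw [prod_mul_distrib, prod_pow]
    _ ≤ (∏ j ∈ range n, (u + j)) ^ 2 * exp (π * v) := by
        gcongr; exact prod_one_add_sq_div_sq_le_exp hv n
    _ = (exp (π * v / 2) * ∏ j ∈ range n, (u + j)) ^ 2 := by
        rw [mul_pow, ← exp_nat_mul]; ring_nf

theorem Real.Gamma_le_exp_mul_norm_Gamma {u v : ℝ} (hu : 1 ≤ u) (hv : 0 ≤ v) :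
    Gamma u ≤ exp (π * v / 2) * ‖Complex.Gamma (u + v * Complex.I)‖ := by
  set s : ℂ := u + v * Complex.I
  refine le_of_tendsto_of_tendsto (GammaSeq_tendsto_Gamma u)
    ((Complex.GammaSeq_tendsto_Gamma s).norm.const_mul _) ?_
  filter_upwards [eventually_ne_atTop 0] with n hn
  have hQ : 0 < ∏ j ∈ range (n + 1), ‖s + j‖ := prod_pos fun j _ ↦ norm_pos_iff.mpr fun h ↦ by
    have := congrArg Complex.re h
    simp [s] at this
    linarith [j.cast_nonneg (α := ℝ)]
  have h_norm :
      ‖Complex.GammaSeq s n‖ = (n : ℝ) ^ u * n.factorial / ∏ j ∈ range (n + 1), ‖s + j‖ := by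
    rw [Complex.GammaSeq, norm_div, norm_mul,
      Complex.norm_natCast_cpow_of_pos (Nat.pos_of_ne_zero hn), norm_prod]
    simp [s]
  calc GammaSeq u n = exp (π * v / 2) * ((n : ℝ) ^ u * n.factorial) /
        (exp (π * v / 2) * ∏ j ∈ range (n + 1), (u + j)) :=
        (mul_div_mul_left _ _ (exp_ne_zero _)).symm
    _ ≤ exp (π * v / 2) * ((n : ℝ) ^ u * n.factorial) / ∏ j ∈ range (n + 1), ‖s + j‖ :=
        div_le_div_of_nonneg_left (by positivity) hQ (prod_norm_add_natCast_le hu hv _)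
    _ = exp (π * v / 2) * ‖Complex.GammaSeq s n‖ := by rw [h_norm, mul_div_assoc]

open MeasureTheory in
theorem Real.rpow_mul_exp_neg_le_Gamma_add_one {u : ℝ} (hu : 0 ≤ u) :
    u ^ u * exp (-u) ≤ Gamma (u + 1) := by
  have h_int : IntegrableOn (fun t ↦ exp (-t) * t ^ u) (Set.Ioi 0) := by
    simpa using GammaIntegral_convergent (s := u + 1) (by linarith)
  rw [Gamma_eq_integral (by linarith), add_sub_cancel_right]
  calc u ^ u * exp (-u) = ∫ t in Set.Ioi u, exp (-t) * u ^ u := by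
        rw [integral_mul_const, integral_exp_neg_Ioi, mul_comm]
    _ ≤ ∫ t in Set.Ioi u, exp (-t) * t ^ u :=
        setIntegral_mono_on ((integrableOn_exp_neg_Ioi u).mul_const _)
          (h_int.mono_set (Set.Ioi_subset_Ioi hu)) measurableSet_Ioi fun t ht ↦ by
            gcongr; exact ht.le
    _ ≤ ∫ t in Set.Ioi 0, exp (-t) * t ^ u :=
        setIntegral_mono_set h_int
          ((ae_restrict_iff' measurableSet_Ioi).mpr (.of_forall fun t ht ↦ by
            have : (0 : ℝ) < t := ht; positivity))
          (Set.Ioi_subset_Ioi hu).eventuallyLE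

theorem rpow_mul_exp_le_mul_norm_Gamma {u v : ℝ} (hu : 0 < u) (hv : 0 ≤ v) :
    u ^ u * exp (-u - π * v / 2) ≤ (u + v) * ‖Complex.Gamma (u + v * Complex.I)‖ := by
  set s : ℂ := u + v * Complex.I
  have hs : s ≠ 0 := fun h ↦ by simpa [s, hu.ne'] using congrArg Complex.re h
  have h_norm : ‖s‖ ≤ u + v := (Complex.norm_le_abs_re_add_abs_im s).trans_eq (by
    simp [s, abs_of_pos hu, abs_of_nonneg hv])
  rw [sub_eq_add_neg, exp_add, exp_neg (π * v / 2), ← mul_assoc, mul_inv_le_iff₀ (exp_pos _)]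
  calc u ^ u * exp (-u) ≤ Gamma (u + 1) := rpow_mul_exp_neg_le_Gamma_add_one hu.le
    _ ≤ exp (π * v / 2) * ‖Complex.Gamma (↑(u + 1) + v * Complex.I)‖ :=
        Gamma_le_exp_mul_norm_Gamma (by linarith) hv
    _ = exp (π * v / 2) * (‖s‖ * ‖Complex.Gamma s‖) := by
        rw [← norm_mul, ← Complex.Gamma_add_one s hs, Complex.ofReal_add, Complex.ofReal_one,
          add_right_comm]
    _ ≤ (u + v) * ‖Complex.Gamma s‖ * exp (π * v / 2) := by
        rw [mul_comm]; gcongr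

theorem inv_norm_Gamma_rpow_le {u v α : ℝ} (hu : 0 < u) (hv : 0 ≤ v) (hα : 0 ≤ α) :
    (‖Complex.Gamma (u + v * Complex.I)‖ ^ α)⁻¹ ≤
      u ^ (-(α * u)) * (u + v) ^ α * exp (α * (u + π * v / 2)) := by
  have h := rpow_le_rpow (by positivity) (rpow_mul_exp_le_mul_norm_Gamma hu hv) hα
  rw [mul_rpow (by positivity) (by positivity), mul_rpow (by positivity) (by positivity),
    ← rpow_mul hu.le, ← exp_mul] at h
  have hL : 0 < u ^ (u * α) * exp ((-u - π * v / 2) * α) := by positivity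
  have hG := pos_of_mul_pos_right (hL.trans_le h) (by positivity)
  have hR : u ^ (-(α * u)) * (u + v) ^ α * exp (α * (u + π * v / 2)) =
      (u + v) ^ α / (u ^ (u * α) * exp ((-u - π * v / 2) * α)) := by
    rw [mul_comm α u, rpow_neg hu.le, show α * (u + π * v / 2) = -((-u - π * v / 2) * α) by ring,
      exp_neg]
    field_simp
  rw [hR, inv_le_comm₀ hG (by positivity), inv_div, div_le_iff₀' (by positivity)]
  exact h

theorem exists_rpow_le_mul_exp {q c : ℝ} (hq : 0 < q) (hc : 0 < c) :
    ∃ K > 0, ∀ T : ℝ, 0 ≤ T → T ^ q ≤ K * exp (c * T) := by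
  refine ⟨(q / c) ^ q, by positivity, fun T hT ↦ ?_⟩
  calc T ^ q = (q / c * (c * T / q)) ^ q := by congr 1; field_simp
    _ = (q / c) ^ q * (c * T / q) ^ q := mul_rpow (by positivity) (by positivity)
    _ ≤ (q / c) ^ q * exp (c * T / q) ^ q := by
        gcongr; linarith [add_one_le_exp (c * T / q)]
    _ = (q / c) ^ q * exp (c * T) := by rw [← exp_mul, div_mul_cancel₀ _ hq.ne']

theorem stmt_11_general (a b α : ℝ) (ha : 0 < a) (hb : 0 < b) (hα : 0 < α)
    (z : ℂ) :
    ∀ δ > (0 : ℝ), ∃ M > (0 : ℝ), ∀ x y : ℝ, 0 ≤ x → 0 ≤ y →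
      ‖z ^ ((x : ℂ) + y * Complex.I)‖ /
          ‖Complex.Gamma (a * ((x : ℂ) + y * Complex.I) + b)‖ ^ α ≤
        M * Real.exp ((a * α + δ) * x) * ‖z‖ ^ x *
          (a * x + b) ^ (-(α * (a * x + b))) *
          Real.exp ((|z.arg| + a * α * π / 2 + δ) * y) := by
  intro δ hδ
  obtain ⟨K, hK, h_poly⟩ := exists_rpow_le_mul_exp hα (div_pos hδ ha)
  refine ⟨K * exp (α * b + δ * b / a), by positivity, fun x y hx hy ↦ ?_⟩
  have h_arg : (a : ℂ) * (x + y * Complex.I) + b = ↑(a * x + b) + ↑(a * y) * Complex.I := by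
    push_cast; ring
  have h_cpow : ‖z ^ ((x : ℂ) + y * Complex.I)‖ ≤ ‖z‖ ^ x * exp (|z.arg| * y) := by
    refine (Complex.norm_cpow_le _ _).trans ?_
    rw [show ((x : ℂ) + y * Complex.I).re = x by simp,
      show ((x : ℂ) + y * Complex.I).im = y by simp, div_eq_mul_inv, ← exp_neg]
    gcongr
    nlinarith [neg_abs_le z.arg]
  set u := a * x + b
  set v := a * y
  have hu : 0 < u := by positivity
  have hv : 0 ≤ v := by positivity
  have h_exp : exp (|z.arg| * y) * exp (δ / a * (u + v)) * exp (α * (u + π * v / 2)) =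
      exp (α * b + δ * b / a) * exp ((a * α + δ) * x) *
        exp ((|z.arg| + a * α * π / 2 + δ) * y) := by
    simp only [← exp_add, u, v]
    congr 1
    field_simp
    ring
  rw [h_arg, div_eq_mul_inv]
  calc ‖z ^ ((x : ℂ) + y * Complex.I)‖ * (‖Complex.Gamma (u + v * Complex.I)‖ ^ α)⁻¹
      ≤ (‖z‖ ^ x * exp (|z.arg| * y)) *
          (u ^ (-(α * u)) * (u + v) ^ α * exp (α * (u + π * v / 2))) :=
        mul_le_mul h_cpow (inv_norm_Gamma_rpow_le hu hv hα.le) (by positivity) (by positivity)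
    _ ≤ (‖z‖ ^ x * exp (|z.arg| * y)) *
          (u ^ (-(α * u)) * (K * exp (δ / a * (u + v))) * exp (α * (u + π * v / 2))) := by
        gcongr; exact h_poly _ (by positivity)
    _ = _ := by linear_combination (‖z‖ ^ x * u ^ (-(α * u)) * K) * h_exp

theorem stmt_11 (a b α : ℝ) (ha : 0 < a) (hb : 0 < b) (hα : 0 < α)
    (z : ℂ) (hz1 : 1 < ‖z‖) (hz2 : |z.arg| < a * α * π / 2) :
    ∀ δ > (0 : ℝ), ∃ M > (0 : ℝ), ∀ x y : ℝ, 0 ≤ x → 0 ≤ y →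
      ‖z ^ ((x : ℂ) + y * Complex.I)‖ /
          ‖Complex.Gamma (a * ((x : ℂ) + y * Complex.I) + b)‖ ^ α ≤
        M * Real.exp ((a * α + δ) * x) * ‖z‖ ^ x *
          (a * x + b) ^ (-(α * (a * x + b))) *
          Real.exp ((|z.arg| + a * α * π / 2 + δ) * y) :=
  stmt_11_general a b α ha hb hα z
end
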